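/- For all a, b, c ∈ 𝕆, the characteristic polynomial of the ℂ-linear endomorphism L_a∘L_b∘R_c + R_c̄∘L_b̄∘L_ā of the 8-dimensional space 𝕆 is divisible by (X − 2·Re(c̄·(b·a)))⁴ in ℂ[X]; that is, 2·Re(c̄·(b·a)) is an eigenvalue of the map x ↦ a·(b·(x·c)) + (b̄·(ā·x))·c̄ of algebraic multiplicity at least 4. -/

import Mathlib

noncomputable section

open scoped Quaternion

/-- The complexified quaternions. -/
abbrev Hq : Type := Quaternion ℂ

theorem q_mul_smul (t : ℂ) (a b : Hq) : a * (t • b) = t • (a * b) := by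
  rw [← Quaternion.coe_mul_eq_smul, ← Quaternion.coe_mul_eq_smul, ← mul_assoc,
    ← Quaternion.coe_commutes, mul_assoc]

theorem q_smul_mul (t : ℂ) (a b : Hq) : (t • a) * b = t • (a * b) := by
  rw [← Quaternion.coe_mul_eq_smul, ← Quaternion.coe_mul_eq_smul, mul_assoc]

/-- The complexified octonions, via the Cayley–Dickson construction. -/
abbrev Oct : Type := Hq × Hq

namespace Oct

/-- Octonion multiplication (Cayley–Dickson construction). -/
def omul (x y : Oct) : Oct := (x.1 * y.1 - star y.2 * x.2, y.2 * x.1 + x.2 * star y.1)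

/-- Octonion conjugation. -/
def oconj (x : Oct) : Oct := (star x.1, -x.2)

/-- The unit octonion. -/
def oone : Oct := (1, 0)

/-- Real part of an octonion: the unique scalar with `x + oconj x = (2 * oRe x) • oone`. -/
def oRe (x : Oct) : ℂ := x.1.re

/-- Squared norm of an octonion: the unique scalar with `omul x (oconj x) = onormSq x • oone`. -/
def onormSq (x : Oct) : ℂ := Quaternion.normSq x.1 + Quaternion.normSq x.2

theorem omul_add (z x y : Oct) : omul z (x + y) = omul z x + omul z y := by
  simp only [omul, Prod.fst_add, Prod.snd_add, star_add (R := Hq), mul_add, add_mul, Prod.mk_add_mk,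
    Prod.mk.injEq]
  constructor <;> abel

theorem add_omul (x y z : Oct) : omul (x + y) z = omul x z + omul y z := by
  simp only [omul, Prod.fst_add, Prod.snd_add, star_add, mul_add, add_mul, Prod.mk_add_mk,
    Prod.mk.injEq]
  constructor <;> abel

theorem omul_smul (t : ℂ) (z x : Oct) : omul z (t • x) = t • omul z x := by
  simp only [omul, Prod.smul_fst, Prod.smul_snd, Quaternion.star_smul, q_smul_mul,
    q_mul_smul, Prod.smul_mk, smul_sub, smul_add]

theorem smul_omul (t : ℂ) (x z : Oct) : omul (t • x) z = t • omul x z := by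
  simp only [omul, Prod.smul_fst, Prod.smul_snd, Quaternion.star_smul, q_smul_mul,
    q_mul_smul, Prod.smul_mk, smul_sub, smul_add]

/-- Left multiplication `L_z` as a `ℂ`-linear endomorphism of the octonions. -/
def Lmul (z : Oct) : Oct →ₗ[ℂ] Oct where
  toFun x := omul z x
  map_add' x y := omul_add z x y
  map_smul' t x := omul_smul t z x

/-- Right multiplication `R_z` as a `ℂ`-linear endomorphism of the octonions. -/
def Rmul (z : Oct) : Oct →ₗ[ℂ] Oct where
  toFun x := omul x z
  map_add' x y := add_omul x y z
  map_smul' t x := smul_omul t x z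

end Oct

namespace Oct

/-- The octonionic determinant of the hermitian matrix
`[[λ₁, c, b̄], [c̄, λ₂, a], [b, ā, λ₃]]`. -/
def detO (l1 l2 l3 : ℂ) (a b c : Oct) : ℂ :=
  l1 * l2 * l3 + 2 * oRe (omul c (omul a b)) - l1 * onormSq a - l2 * onormSq b - l3 * onormSq c

/-- The associator `[c,b,a] = (c·b)·a − c·(b·a)`. -/
def assoc (c b a : Oct) : Oct := omul (omul c b) a - omul c (omul b a)

/-- `φ(c,b,a) = (1/2)·Re((c·b̄ − b̄·c)·a)`. -/
def phi (c b a : Oct) : ℂ := (1 / 2) * oRe (omul (omul c (oconj b) - omul (oconj b) c) a)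

/-- The Ogievetskiî–Dray–Manogue sextic. -/
def SODM (l1 l2 l3 : ℂ) (a b c : Oct) : ℂ :=
  detO l1 l2 l3 a b c ^ 2 - 4 * phi c b a * detO l1 l2 l3 a b c - onormSq (assoc c b a)

/-- The Cartan cubic `C'` of the hermitian matrix `[[λ₁, c̄, ā], [c, λ₂, b], [a, b̄, λ₃]]`. -/
def cartan' (l1 l2 l3 : ℂ) (a b c : Oct) : ℂ :=
  detO l1 l2 l3 a b c - 2 * oRe (omul c (omul a b)) + 2 * oRe (omul (oconj c) (omul b a))

/-- The sextic `𝔖`. -/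
def frakS (l1 l2 l3 : ℂ) (a b c : Oct) : ℂ :=
  (l1 * onormSq a + l2 * onormSq b + l3 * onormSq c - l1 * l2 * l3) ^ 2
    - 4 * (l1 * onormSq a + l2 * onormSq b + l3 * onormSq c - l1 * l2 * l3)
        * oRe c * oRe (omul a b)
    + 4 * (onormSq b * onormSq a * oRe c ^ 2 + onormSq c * oRe (omul a b) ^ 2
        - onormSq a * onormSq b * onormSq c)

/-- The endomorphism `M_A` of `𝕆³` attached to
`A = [[λ₁, c, b̄], [c̄, λ₂, a], [b, ā, λ₃]] ∈ J₃(𝕆)`. -/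
def MA (l1 l2 l3 : ℂ) (a b c : Oct) : Oct × Oct × Oct →ₗ[ℂ] Oct × Oct × Oct where
  toFun p := (l1 • p.1 + omul c p.2.1 + omul (oconj b) p.2.2,
              omul (oconj c) p.1 + l2 • p.2.1 + omul a p.2.2,
              omul b p.1 + omul (oconj a) p.2.1 + l3 • p.2.2)
  map_add' p q := by
    simp only [Prod.fst_add, Prod.snd_add, omul_add, smul_add, Prod.mk_add_mk, Prod.mk.injEq]
    refine ⟨?_, ?_, ?_⟩ <;> abel
  map_smul' t p := by
    simp only [Prod.smul_fst, Prod.smul_snd, omul_smul, smul_comm t, Prod.smul_mk, smul_add,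
      RingHom.id_apply]

/-- The endomorphism `N_A` of `𝕆³` of the twisted octonionic eigenvalue problem. -/
def NA (l1 l2 l3 : ℂ) (a b c : Oct) : Oct × Oct × Oct →ₗ[ℂ] Oct × Oct × Oct where
  toFun p := (l1 • p.1 + omul p.2.1 c + omul (oconj b) p.2.2,
              omul p.1 (oconj c) + l2 • p.2.1 + omul a p.2.2,
              omul b p.1 + omul (oconj a) p.2.1 + l3 • p.2.2)
  map_add' p q := by
    simp only [Prod.fst_add, Prod.snd_add, omul_add, add_omul, smul_add, Prod.mk_add_mk,
      Prod.mk.injEq]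
    refine ⟨?_, ?_, ?_⟩ <;> abel
  map_smul' t p := by
    simp only [Prod.smul_fst, Prod.smul_snd, omul_smul, smul_omul, smul_comm t, Prod.smul_mk,
      smul_add, RingHom.id_apply]

/-- The exceptional Jordan algebra `J₃(𝕆)`, as the 27-dimensional space of tuples
`(λ₁, λ₂, λ₃, a, b, c)`. -/
abbrev J3 : Type := ℂ × ℂ × ℂ × Oct × Oct × Oct

def MAj (A : J3) : Oct × Oct × Oct →ₗ[ℂ] Oct × Oct × Oct :=
  MA A.1 A.2.1 A.2.2.1 A.2.2.2.1 A.2.2.2.2.1 A.2.2.2.2.2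

def NAj (A : J3) : Oct × Oct × Oct →ₗ[ℂ] Oct × Oct × Oct :=
  NA A.1 A.2.1 A.2.2.1 A.2.2.2.1 A.2.2.2.2.1 A.2.2.2.2.2

def SODMj (A : J3) : ℂ := SODM A.1 A.2.1 A.2.2.1 A.2.2.2.1 A.2.2.2.2.1 A.2.2.2.2.2

def cartan'j (A : J3) : ℂ := cartan' A.1 A.2.1 A.2.2.1 A.2.2.2.1 A.2.2.2.2.1 A.2.2.2.2.2

def frakSj (A : J3) : ℂ := frakS A.1 A.2.1 A.2.2.1 A.2.2.2.1 A.2.2.2.2.1 A.2.2.2.2.2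

/-- A twisted triality pair: a pair of `ℂ`-linear norm-preserving bijections of `𝕆` with
`T₁(x)·T₂(y) = T₁(x·y)` for all `x, y`. -/
def TwistedPair (T1 T2 : Oct →ₗ[ℂ] Oct) : Prop :=
  Function.Bijective T1 ∧ Function.Bijective T2 ∧
    (∀ x, onormSq (T1 x) = onormSq x) ∧ (∀ x, onormSq (T2 x) = onormSq x) ∧
    ∀ x y, omul (T1 x) (T2 y) = T1 (omul x y)

/-- `K(x) = conj (T₁ x̄)`. -/
def Kmap (T1 : Oct →ₗ[ℂ] Oct) (x : Oct) : Oct := oconj (T1 (oconj x))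

/-- The twisted `Spin₇`-action on `J₃(𝕆)`:
`(T₁,T₂)·(λ₁, λ₂, λ₃, a, b, c) = (λ₁, λ₂, λ₃, T₁(a), K(b), T₂(c))`. -/
def spinAct (T1 T2 : Oct →ₗ[ℂ] Oct) (A : J3) : J3 :=
  (A.1, A.2.1, A.2.2.1, T1 A.2.2.2.1, Kmap T1 A.2.2.2.2.1, T2 A.2.2.2.2.2)

/-- The hermitian matrix `[[λ₁, c, b̄], [c̄, λ₂, a], [b, ā, λ₃]]` attached to `A ∈ J₃(𝕆)`,
with complex scalars embedded as multiples of the unit octonion. -/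
def toMat (A : J3) : Matrix (Fin 3) (Fin 3) Oct :=
  !![A.1 • oone, A.2.2.2.2.2, oconj A.2.2.2.2.1;
     oconj A.2.2.2.2.2, A.2.1 • oone, A.2.2.2.1;
     A.2.2.2.2.1, oconj A.2.2.2.1, A.2.2.1 • oone]

/-- The action of a (special linear) complex `3×3` matrix `C` on `J₃(𝕆)`, sending the hermitian
matrix `M` of `A` to `Cᵀ · M · C` (the entries of `C` being central scalars). -/
def slAct (C : Matrix (Fin 3) (Fin 3) ℂ) (A : J3) : J3 :=
  let M : Matrix (Fin 3) (Fin 3) Oct :=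
    Matrix.of fun i j => ∑ k, ∑ l, (C k i * C l j) • toMat A k l
  (oRe (M 0 0), oRe (M 1 1), oRe (M 2 2), M 1 2, M 2 0, M 0 1)

/-- The coordinates of `A ∈ J₃(𝕆)` in the fixed standard `ℂ`-basis of `ℂ³ × 𝕆³`. -/
def coords (A : J3) : Fin 27 → ℂ :=
  ![A.1, A.2.1, A.2.2.1,
    A.2.2.2.1.1.re, A.2.2.2.1.1.imI, A.2.2.2.1.1.imJ, A.2.2.2.1.1.imK,
    A.2.2.2.1.2.re, A.2.2.2.1.2.imI, A.2.2.2.1.2.imJ, A.2.2.2.1.2.imK,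
    A.2.2.2.2.1.1.re, A.2.2.2.2.1.1.imI, A.2.2.2.2.1.1.imJ, A.2.2.2.2.1.1.imK,
    A.2.2.2.2.1.2.re, A.2.2.2.2.1.2.imI, A.2.2.2.2.1.2.imJ, A.2.2.2.2.1.2.imK,
    A.2.2.2.2.2.1.re, A.2.2.2.2.2.1.imI, A.2.2.2.2.2.1.imJ, A.2.2.2.2.2.1.imK,
    A.2.2.2.2.2.2.re, A.2.2.2.2.2.2.imI, A.2.2.2.2.2.2.imJ, A.2.2.2.2.2.2.imK]

end Oct

/-!
In Cayley–Dickson coordinates one checks that `a·(b·(x·c)) + (b̄·(ā·x))·c̄` differs from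
`2 Re(c̄·(b·a)) x` by a combination of `b̄, a·c, a, b̄·c` with coefficients `⟨a·c, x⟩, ⟨b̄, x⟩,
⟨b̄·c, x⟩, ⟨a, x⟩` (up to sign and a factor `2`). Hence the map acts as the scalar
`2 Re(c̄·(b·a))` on the common kernel of four linear functionals on the 8-dimensional `𝕆`, an
eigenspace of dimension at least `4`, and geometric multiplicity bounds algebraic multiplicity.
-/

namespace Module.End

open Polynomial

theorem pow_finrank_eigenspace_dvd_charpoly {K M : Type*} [Field K] [AddCommGroup M] [Module K M]
    [FiniteDimensional K M] (f : End K M) (μ : K) :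
    (X - C μ) ^ finrank K (f.eigenspace μ) ∣ f.charpoly :=
  (pow_dvd_pow _ (LinearMap.finrank_eigenspace_le f μ)).trans (pow_rootMultiplicity_dvd _ _)

end Module.End

theorem LinearMap.finrank_sub_finrank_le_finrank_ker {K V W : Type*} [DivisionRing K]
    [AddCommGroup V] [Module K V] [AddCommGroup W] [Module K W] [FiniteDimensional K V]
    [FiniteDimensional K W] (f : V →ₗ[K] W) :
    Module.finrank K V - Module.finrank K W ≤ Module.finrank K (LinearMap.ker f) := by
  have := f.finrank_range_add_finrank_ker
  have := Submodule.finrank_le (LinearMap.range f)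
  omega

namespace Oct

open Module

theorem finrank_oct : finrank ℂ Oct = 8 := by
  rw [Module.finrank_prod, Quaternion.finrank_eq_four]

/-- `x ↦ ⟨u, x⟩ = Re(ū·x)`, the polar form of `onormSq`. -/
def innerL (u : Oct) : Oct →ₗ[ℂ] ℂ where
  toFun x := oRe (omul (oconj u) x)
  map_add' x y := by rw [omul_add]; rfl
  map_smul' t x := by rw [omul_smul]; rfl

set_option maxHeartbeats 400000 in
theorem mul_mul_mul_add_conj_mul_mul_conj (a b c x : Oct) :
    omul a (omul b (omul x c)) + omul (omul (oconj b) (omul (oconj a) x)) (oconj c)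
      = (2 * oRe (omul (oconj c) (omul b a))) • x
        + ((2 * innerL (omul a c) x) • oconj b + (2 * innerL (oconj b) x) • omul a c
        - (2 * innerL (omul (oconj b) c) x) • a - (2 * innerL a x) • omul (oconj b) c) := by
  obtain ⟨a1, a2⟩ := a; obtain ⟨b1, b2⟩ := b; obtain ⟨c1, c2⟩ := c; obtain ⟨x1, x2⟩ := x
  simp only [innerL, LinearMap.coe_mk, AddHom.coe_mk, omul, oconj, oRe, Prod.mk_add_mk,
    Prod.mk_sub_mk, Prod.smul_mk, Prod.mk.injEq]
  constructor <;>
  · ext <;>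
      simp only [Quaternion.re_mul, Quaternion.imI_mul, Quaternion.imJ_mul, Quaternion.imK_mul,
        Quaternion.re_add, Quaternion.imI_add, Quaternion.imJ_add, Quaternion.imK_add,
        Quaternion.re_sub, Quaternion.imI_sub, Quaternion.imJ_sub, Quaternion.imK_sub,
        Quaternion.re_neg, Quaternion.imI_neg, Quaternion.imJ_neg, Quaternion.imK_neg,
        Quaternion.re_star, Quaternion.imI_star, Quaternion.imJ_star, Quaternion.imK_star,
        Quaternion.re_smul, Quaternion.imI_smul, Quaternion.imJ_smul, Quaternion.imK_smul,
        smul_eq_mul] <;>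
      ring

theorem ker_innerL_le_eigenspace (a b c : Oct) :
    LinearMap.ker (LinearMap.pi
        ![innerL (omul a c), innerL (oconj b), innerL (omul (oconj b) c), innerL a]) ≤
      Module.End.eigenspace
        (Lmul a ∘ₗ Lmul b ∘ₗ Rmul c + Rmul (oconj c) ∘ₗ Lmul (oconj b) ∘ₗ Lmul (oconj a))
        (2 * oRe (omul (oconj c) (omul b a))) := by
  intro x hx
  have h := LinearMap.mem_ker.1 hx
  obtain ⟨h₁, h₂, h₃, h₄⟩ : innerL (omul a c) x = 0 ∧ innerL (oconj b) x = 0 ∧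
      innerL (omul (oconj b) c) x = 0 ∧ innerL a x = 0 :=
    ⟨congr_fun h 0, congr_fun h 1, congr_fun h 2, congr_fun h 3⟩
  rw [Module.End.mem_eigenspace_iff]
  change omul a (omul b (omul x c)) + omul (omul (oconj b) (omul (oconj a) x)) (oconj c) = _
  rw [mul_mul_mul_add_conj_mul_mul_conj, h₁, h₂, h₃, h₄]
  module

/-- For all `a, b, c ∈ 𝕆`, the characteristic polynomial of `L_a∘L_b∘R_c + R_c̄∘L_b̄∘L_ā`
is divisible by `(X − 2·Re(c̄·(b·a)))⁴`: the scalar `2·Re(c̄·(b·a))` is an eigenvalue of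
`x ↦ a·(b·(x·c)) + (b̄·(ā·x))·c̄` of algebraic multiplicity at least `4`. -/
theorem charpoly_divisibility (a b c : Oct) :
    (Polynomial.X - Polynomial.C (2 * oRe (omul (oconj c) (omul b a)))) ^ 4 ∣
      LinearMap.charpoly
        (Lmul a ∘ₗ Lmul b ∘ₗ Rmul c + Rmul (oconj c) ∘ₗ Lmul (oconj b) ∘ₗ Lmul (oconj a)) := by
  set P := LinearMap.pi
    ![innerL (omul a c), innerL (oconj b), innerL (omul (oconj b) c), innerL a]
  have hP : 4 ≤ finrank ℂ (LinearMap.ker P) := by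
    have := P.finrank_sub_finrank_le_finrank_ker
    rwa [finrank_oct, Module.finrank_fin_fun] at this
  exact (pow_dvd_pow _ (hP.trans (Submodule.finrank_mono (ker_innerL_le_eigenspace a b c)))).trans
    (Module.End.pow_finrank_eigenspace_dvd_charpoly _ _)

end Oct
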